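/- arXiv:1508.01643 — 10 statements merged into one kernel-verified Lean document; each statement's English description precedes it below -/
import Mathlib

section
/- Let T ⊆ R^m × R^s be a set closed under free disposability (if (x,y) ∈ T, x' ≥ x, 0 ≤ y' ≤ y then (x',y') ∈ T). Then for (x₀,y₀) ∈ T with x₀ ≠ 0, there exists θ < 1 with (θ·x₀, y₀) ∈ T if and only if there exists (x,y) ∈ T with x₀ >^+ x and y ≥ y₀. -/
/-- For a technology set `T` closed under free disposability and
`(x₀, y₀) ∈ T` in the nonnegative orthant with `x₀ ≠ 0`: radial input
improvement (`∃ θ < 1, (θ • x₀, y₀) ∈ T`) is equivalent to FGL dominance by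
some `(x, y) ∈ T`, i.e. `x₀ >⁺ x` and `y ≥ y₀`. -/
theorem stmt_1 {m s : ℕ} (T : Set ((Fin m → ℝ) × (Fin s → ℝ)))
    (hfd : ∀ x y x' y', (x, y) ∈ T → x ≤ x' → 0 ≤ y' → y' ≤ y → (x', y') ∈ T)
    (x₀ : Fin m → ℝ) (y₀ : Fin s → ℝ) (hx₀ : 0 ≤ x₀) (hy₀ : 0 ≤ y₀)
    (hmem : (x₀, y₀) ∈ T) (hne : x₀ ≠ 0) :
    (∃ θ : ℝ, θ < 1 ∧ (θ • x₀, y₀) ∈ T) ↔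
      ∃ x y, (x, y) ∈ T ∧ (∀ j, x₀ j > x j ∨ (x₀ j = x j ∧ x₀ j = 0)) ∧ y₀ ≤ y := by
  constructor
  · rintro ⟨θ, hθ, hT⟩
    refine ⟨(max θ 0) • x₀, y₀, hfd _ _ _ _ hT ?_ hy₀ le_rfl, ?_, le_rfl⟩
    · intro j
      simp only [Pi.smul_apply, smul_eq_mul]
      exact mul_le_mul_of_nonneg_right (le_max_left _ _) (hx₀ j)
    · intro j
      rcases lt_or_eq_of_le (hx₀ j) with h | h
      · left
        simp only [Pi.smul_apply, smul_eq_mul]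
        calc max θ 0 * x₀ j < 1 * x₀ j :=
              mul_lt_mul_of_pos_right (max_lt hθ one_pos) h
          _ = x₀ j := one_mul _
      · right
        constructor
        · simp [Pi.smul_apply, ← h]
        · exact h.symm
  · rintro ⟨x, y, hTxy, hdom, hyy⟩
    have hm : (Finset.univ : Finset (Fin m)).Nonempty := by
      rcases Nat.eq_zero_or_pos m with h | h
      · exfalso; apply hne; funext j; exact absurd j.2 (by omega)
      · exact ⟨⟨0, h⟩, Finset.mem_univ _⟩
    set f : Fin m → ℝ := fun j => if 0 < x₀ j then x j / x₀ j else 0 with hf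
    set θ := Finset.univ.sup' hm f with hθdef
    have hθ1 : θ < 1 := by
      refine (Finset.sup'_lt_iff hm).2 ?_
      intro j _
      simp only [hf]
      split_ifs with h
      · rw [div_lt_one h]
        rcases hdom j with h' | ⟨h', h''⟩
        · exact h'
        · linarith
      · exact one_pos
    have hx : x ≤ θ • x₀ := by
      intro j
      simp only [Pi.smul_apply, smul_eq_mul]
      rcases lt_or_eq_of_le (hx₀ j) with h | h
      · have h : (0:ℝ) < x₀ j := h
        have hle : x j / x₀ j ≤ θ := by
          have h2 := Finset.le_sup' f (Finset.mem_univ j)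
          rwa [show f j = x j / x₀ j from by simp [hf, h]] at h2
        calc x j = (x j / x₀ j) * x₀ j := (div_mul_cancel₀ _ h.ne').symm
          _ ≤ θ * x₀ j := mul_le_mul_of_nonneg_right hle h.le
      · have h0 : x₀ j = 0 := by simpa using h.symm
        rw [h0, mul_zero]
        rcases hdom j with h' | ⟨h', _⟩
        · linarith [h0 ▸ h']
        · rw [← h', h0]
    exact ⟨θ, hθ1, hfd _ _ _ _ hTxy hx hy₀ hyy⟩
end

section
/- Let X be an m×(n-1) matrix and Y an s×(n-1) matrix with nonnegative entries, and let (x₀, y₀) ∈ R^m_{≥0} × R^s_{≥0}. Define Ω₀ = { (x₀ - s⁻, y₀ + s⁺) : ∃ μ ≥ 0, 1ᵀμ = 1, s⁻ ≥ 0, s⁺ ≥ 0, Xμ + s⁻ ≤ x₀, Yμ - s⁺ ≥ y₀ }. Then Ω₀ is nonempty if and only if the system { δ ≥ 0, 1ᵀδ ≥ 1, Xδ + t⁻ ≤ (1ᵀδ)x₀, Yδ - t⁺ ≥ (1ᵀδ)y₀, 0 ≤ t⁻ ≤ 1, 0 ≤ t⁺ ≤ 1 } has a solution (δ, t⁻,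 t⁺). -/
/-- `Ω₀` (the set of leave-one-out VRS activities dominating `(x₀, y₀)`) is
nonempty iff the system (14) is feasible. -/
theorem stmt_3 {m s k : ℕ} (X : Matrix (Fin m) (Fin k) ℝ) (Y : Matrix (Fin s) (Fin k) ℝ)
    (hX : ∀ i j, 0 ≤ X i j) (hY : ∀ i j, 0 ≤ Y i j)
    (x₀ : Fin m → ℝ) (y₀ : Fin s → ℝ) (hx₀ : 0 ≤ x₀) (hy₀ : 0 ≤ y₀) :
    (∃ (μ : Fin k → ℝ) (sm : Fin m → ℝ) (sp : Fin s → ℝ),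
        0 ≤ μ ∧ ∑ j, μ j = 1 ∧ 0 ≤ sm ∧ 0 ≤ sp ∧
        X.mulVec μ + sm ≤ x₀ ∧ y₀ ≤ Y.mulVec μ - sp) ↔
    (∃ (δ : Fin k → ℝ) (tm : Fin m → ℝ) (tp : Fin s → ℝ),
        0 ≤ δ ∧ 1 ≤ ∑ j, δ j ∧
        X.mulVec δ + tm ≤ (∑ j, δ j) • x₀ ∧ (∑ j, δ j) • y₀ ≤ Y.mulVec δ - tp ∧
        0 ≤ tm ∧ tm ≤ 1 ∧ 0 ≤ tp ∧ tp ≤ 1) := by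
  constructor
  · rintro ⟨μ, sm, sp, hμ, hsum, hsm, hsp, hin, hout⟩
    refine ⟨μ, fun i => min (sm i) 1, fun i => min (sp i) 1, hμ, by rw [hsum],
      ?_, ?_, ?_, ?_, ?_, ?_⟩
    · intro i
      calc X.mulVec μ i + min (sm i) 1 ≤ X.mulVec μ i + sm i := by
            simp [min_le_left]
        _ ≤ x₀ i := hin i
        _ = (∑ j, μ j) • x₀ i := by rw [hsum]; simp
    · intro i
      have := hout i
      have := hout i
      have h2 : min (sp i) 1 ≤ sp i := min_le_left _ _
      simp only [Pi.sub_apply, Pi.smul_apply, smul_eq_mul, hsum, one_mul] at *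
      linarith
    · intro i; exact le_min (hsm i) zero_le_one
    · intro i; exact min_le_right _ _
    · intro i; exact le_min (hsp i) zero_le_one
    · intro i; exact min_le_right _ _
  · rintro ⟨δ, tm, tp, hδ, hsum, hin, hout, htm0, _, htp0, _⟩
    set S := ∑ j, δ j with hS
    have hSpos : 0 < S := lt_of_lt_of_le one_pos hsum
    refine ⟨S⁻¹ • δ, S⁻¹ • tm, S⁻¹ • tp, ?_, ?_, ?_, ?_, ?_, ?_⟩
    · intro i; exact mul_nonneg (inv_nonneg.2 hSpos.le) (hδ i)
    · simp only [Pi.smul_apply, smul_eq_mul]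
      rw [← Finset.mul_sum]
      exact inv_mul_cancel₀ hSpos.ne'
    · intro i; exact mul_nonneg (inv_nonneg.2 hSpos.le) (htm0 i)
    · intro i; exact mul_nonneg (inv_nonneg.2 hSpos.le) (htp0 i)
    · intro i
      have h := hin i
      simp only [Matrix.mulVec_smul, Pi.add_apply, Pi.smul_apply, smul_eq_mul] at *
      rw [← mul_add]
      calc S⁻¹ * (X.mulVec δ i + tm i) ≤ S⁻¹ * (S * x₀ i) := by
            apply mul_le_mul_of_nonneg_left _ (inv_nonneg.2 hSpos.le)
            exact h
        _ = x₀ i := by field_simp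
    · intro i
      have h := hout i
      simp only [Matrix.mulVec_smul, Pi.sub_apply, Pi.smul_apply, smul_eq_mul] at *
      rw [← mul_sub]
      calc y₀ i = S⁻¹ * (S * y₀ i) := by field_simp
        _ ≤ S⁻¹ * (Y.mulVec δ i - tp i) :=
            mul_le_mul_of_nonneg_left h (inv_nonneg.2 hSpos.le)
end

section
/- With Ω₀ as above, if (x₀ - s⁻, y₀ + s⁺) ∈ Ω₀ with witnessing intensity vector μ (μ ≥ 0, 1ᵀμ = 1, Xμ + s⁻ ≤ x₀, Yμ - s⁺ ≥ y₀), then defining σ = max{1, max_i{1/s⁻_i : s⁻_i > 0}, max_r{1/s⁺_r : s⁺_r > 0}}, δ = σμ, and t⁻_i = 1 if s⁻_i > 0 else 0, t⁺_r = 1 if s⁺_r > 0 else 0, the triple (δ, t⁻, t⁺) satisfies δ ≥ 0, 1ᵀδ ≥ 1, Xδ + t⁻ ≤ (1ᵀδ)x₀, Yδ - t⁺ ≥ (1ᵀδ)y₀, 0 ≤ t⁻ ≤ 1, 0 ≤ t⁺ ≤ 1; furthermore 1ᵀt⁻ equals the number of positive components of s⁻ and 1ᵀt⁺ equals the number of positive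 components of s⁺. -/
/-!
Scaling the intensity vector `μ` by `σ ≥ 1` turns the Ω₀-constraints into the homogeneous
constraints of system (14) with right-hand sides `σ x₀`, `σ y₀` and slacks `σ s⁻`, `σ s⁺`.
Since `σ` is at least the inverse of every positive slack, each positive scaled slack is at
least `1`, so the `0/1` indicators of the positive slacks fit inside the scaled slacks.
-/

open Matrix

section PositiveInverses

variable {ι : Type*} [Fintype ι]

/-- The largest inverse `1 / s i` of a positive entry of `s`, or `1` if that is larger. -/
noncomputable def maxInvPos (s : ι → ℝ) : ℝ :=
  Finset.univ.fold max 1 fun i => if 0 < s i then (s i)⁻¹ else 1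

theorem one_le_maxInvPos (s : ι → ℝ) : 1 ≤ maxInvPos s :=
  Finset.le_fold_max _ |>.mpr (Or.inl le_rfl)

theorem inv_le_maxInvPos {s : ι → ℝ} {i : ι} (hi : 0 < s i) : (s i)⁻¹ ≤ maxInvPos s :=
  Finset.le_fold_max _ |>.mpr (Or.inr ⟨i, Finset.mem_univ i, by simp [hi]⟩)

theorem ite_pos_le_smul {s : ι → ℝ} (hs : 0 ≤ s) {σ : ℝ} (hσ : maxInvPos s ≤ σ) :
    (fun i => if 0 < s i then (1 : ℝ) else 0) ≤ σ • s := by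
  intro i
  have hσ0 : 0 ≤ σ := (zero_le_one.trans (one_le_maxInvPos s)).trans hσ
  by_cases hi : 0 < s i
  · calc (if 0 < s i then (1 : ℝ) else 0) = (s i)⁻¹ * s i := by simp [hi, hi.ne']
      _ ≤ σ * s i := mul_le_mul_of_nonneg_right ((inv_le_maxInvPos hi).trans hσ) hi.le
  · simpa [hi] using mul_nonneg hσ0 (hs i)

end PositiveInverses

section Scaling

variable {ι κ : Type*} [Fintype κ] {X : Matrix ι κ ℝ} {μ : κ → ℝ} {σ : ℝ}

theorem mulVec_smul_add_le_smul {a t x₀ : ι → ℝ} (hin : X *ᵥ μ + a ≤ x₀) (hσ : 0 ≤ σ)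
    (ht : t ≤ σ • a) : X *ᵥ (σ • μ) + t ≤ σ • x₀ :=
  calc X *ᵥ (σ • μ) + t ≤ σ • (X *ᵥ μ) + σ • a := by rw [mulVec_smul]; gcongr
    _ = σ • (X *ᵥ μ + a) := (smul_add σ _ _).symm
    _ ≤ σ • x₀ := smul_le_smul_of_nonneg_left hin hσ

theorem smul_le_mulVec_smul_sub {a t y₀ : ι → ℝ} (hout : y₀ ≤ X *ᵥ μ - a) (hσ : 0 ≤ σ)
    (ht : t ≤ σ • a) : σ • y₀ ≤ X *ᵥ (σ • μ) - t :=
  calc σ • y₀ ≤ σ • (X *ᵥ μ - a) := smul_le_smul_of_nonneg_left hout hσ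
    _ = σ • (X *ᵥ μ) - σ • a := smul_sub σ _ _
    _ ≤ X *ᵥ (σ • μ) - t := by rw [mulVec_smul]; gcongr

theorem sum_smul_of_sum_eq_one (hμ1 : ∑ j, μ j = 1) (σ : ℝ) : ∑ j, (σ • μ) j = σ := by
  simp only [Pi.smul_apply, smul_eq_mul, ← Finset.mul_sum, hμ1, mul_one]

end Scaling

theorem ite_pos_mem_Icc {ι : Type*} (s : ι → ℝ) :
    0 ≤ (fun i => if 0 < s i then (1 : ℝ) else 0) ∧
      (fun i => if 0 < s i then (1 : ℝ) else 0) ≤ 1 := by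
  constructor <;> intro i <;> simp only [Pi.zero_apply, Pi.one_apply] <;> split_ifs <;> norm_num

/-- Proposition 3.2: every element of `Ω₀` yields a feasible solution of
system (14) whose objective records the numbers of positive slacks. -/
theorem stmt_5 {m s k : ℕ} (X : Matrix (Fin m) (Fin k) ℝ) (Y : Matrix (Fin s) (Fin k) ℝ)
    (x₀ : Fin m → ℝ) (y₀ : Fin s → ℝ)
    (μ : Fin k → ℝ) (sm : Fin m → ℝ) (sp : Fin s → ℝ)
    (hμ : 0 ≤ μ) (hμ1 : ∑ j, μ j = 1) (hsm : 0 ≤ sm) (hsp : 0 ≤ sp)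
    (hin : X.mulVec μ + sm ≤ x₀) (hout : y₀ ≤ Y.mulVec μ - sp) :
    let σ := max (Finset.univ.fold max 1 fun i => if 0 < sm i then (sm i)⁻¹ else 1)
                 (Finset.univ.fold max 1 fun r => if 0 < sp r then (sp r)⁻¹ else 1)
    let δ := σ • μ
    let tm : Fin m → ℝ := fun i => if 0 < sm i then 1 else 0
    let tp : Fin s → ℝ := fun r => if 0 < sp r then 1 else 0
    0 ≤ δ ∧ 1 ≤ ∑ j, δ j ∧
      X.mulVec δ + tm ≤ (∑ j, δ j) • x₀ ∧ (∑ j, δ j) • y₀ ≤ Y.mulVec δ - tp ∧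
      0 ≤ tm ∧ tm ≤ 1 ∧ 0 ≤ tp ∧ tp ≤ 1 ∧
      ∑ i, tm i = ((Finset.univ.filter fun i => 0 < sm i).card : ℝ) ∧
      ∑ r, tp r = ((Finset.univ.filter fun r => 0 < sp r).card : ℝ) := by
  intro σ δ tm tp
  have hσ1 : 1 ≤ σ := le_max_of_le_left (one_le_maxInvPos sm)
  have hσ0 : 0 ≤ σ := zero_le_one.trans hσ1
  have hsum : ∑ j, δ j = σ := sum_smul_of_sum_eq_one hμ1 σ
  rw [hsum]
  exact ⟨smul_nonneg hσ0 hμ, hσ1,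
    mulVec_smul_add_le_smul hin hσ0 (ite_pos_le_smul hsm (le_max_left _ _)),
    smul_le_mulVec_smul_sub hout hσ0 (ite_pos_le_smul hsp (le_max_right _ _)),
    (ite_pos_mem_Icc sm).1, (ite_pos_mem_Icc sm).2, (ite_pos_mem_Icc sp).1, (ite_pos_mem_Icc sp).2,
    Finset.sum_boole _ _, Finset.sum_boole _ _⟩
end

section
/- The linear program: maximize 1ᵀt⁻ + 1ᵀt⁺ subject to δ ≥ 0, 1ᵀδ ≥ 1, Xδ + t⁻ ≤ (1ᵀδ)x₀, Yδ - t⁺ ≥ (1ᵀδ)y₀, 0 ≤ t⁻ ≤ 1, 0 ≤ t⁺ ≤ 1, if feasible, attains its maximum, and at any optimum (δ*, t⁻*, t⁺*), the point (x₀ - t⁻*/σ*, y₀ + t⁺*/σ*) with σ* = 1ᵀδ* lies in Ω₀ and maximizes, over all elements (x₀-s⁻, y₀+s⁺) of Ω₀, the total number of positive components of s⁻ and s⁺. -/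
/-!
Since `0 ≤ t ≤ 1`, the LP value of a feasible `(δ, t⁻, t⁺)` is at most the number of positive
slacks of `(t⁻, t⁺)`, which is also that of the normalised point `(δ, t⁻, t⁺) / 1ᵀδ` of `Ω₀`.
Conversely, scaling a point `(μ, s⁻, s⁺)` of `Ω₀` by `L = 1 + ∑ 1/sᵢ` (sum over the positive
slacks) turns every positive slack into one of size at least `1`, so `(Lμ, [s⁻ > 0], [s⁺ > 0])` is feasible and its value is the
number of positive slacks of `(s⁻, s⁺)`. Hence the LP maximum is the largest such count over `Ω₀`,
which exists because the counts are bounded by `m + s`.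
-/

/-- Feasibility for system (14). -/
def Feasible {m s k : ℕ} (X : Matrix (Fin m) (Fin k) ℝ) (Y : Matrix (Fin s) (Fin k) ℝ)
    (x₀ : Fin m → ℝ) (y₀ : Fin s → ℝ)
    (δ : Fin k → ℝ) (tm : Fin m → ℝ) (tp : Fin s → ℝ) : Prop :=
  0 ≤ δ ∧ 1 ≤ ∑ j, δ j ∧ X.mulVec δ + tm ≤ (∑ j, δ j) • x₀ ∧
    (∑ j, δ j) • y₀ ≤ Y.mulVec δ - tp ∧ 0 ≤ tm ∧ tm ≤ 1 ∧ 0 ≤ tp ∧ tp ≤ 1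

open Finset

lemma exists_max_of_forall_le {α : Type*} {p : α → Prop} (f : α → ℕ) {B : ℕ}
    (hB : ∀ a, p a → f a ≤ B) (hp : ∃ a, p a) : ∃ a, p a ∧ ∀ b, p b → f b ≤ f a := by
  have hbdd : BddAbove (f '' {a | p a}) := ⟨B, by rintro _ ⟨a, ha, rfl⟩; exact hB a ha⟩
  obtain ⟨a₀, ha₀⟩ := hp
  obtain ⟨a, ha, hfa⟩ := Nat.sSup_mem (Set.Nonempty.image f ⟨a₀, ha₀⟩) hbdd
  exact ⟨a, ha, fun b hb => hfa ▸ le_csSup hbdd ⟨b, hb, rfl⟩⟩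

section PosCount

variable {ι : Type*}

noncomputable def posIndicator (t : ι → ℝ) : ι → ℝ := fun i => if 0 < t i then 1 else 0

lemma posIndicator_nonneg (t : ι → ℝ) : 0 ≤ posIndicator t := by
  intro i; unfold posIndicator; split_ifs <;> norm_num

lemma posIndicator_le_one (t : ι → ℝ) : posIndicator t ≤ 1 := by
  intro i; unfold posIndicator; split_ifs <;> norm_num

lemma le_posIndicator {t : ι → ℝ} (ht : t ≤ 1) : t ≤ posIndicator t := by
  intro i
  unfold posIndicator
  split_ifs with h
  · exact ht i
  · exact not_lt.1 h

lemma posIndicator_le_smul {t : ι → ℝ} {L : ℝ} (ht : 0 ≤ t) (hL : ∀ i, (t i)⁻¹ ≤ L) :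
    posIndicator t ≤ L • t := by
  intro i
  simp only [posIndicator, Pi.smul_apply, smul_eq_mul]
  split_ifs with h
  · calc (1 : ℝ) = (t i)⁻¹ * t i := (inv_mul_cancel₀ h.ne').symm
      _ ≤ L * t i := mul_le_mul_of_nonneg_right (hL i) h.le
  · rw [le_antisymm (not_lt.1 h) (ht i), mul_zero]

variable [Fintype ι]

noncomputable def posCount (t : ι → ℝ) : ℕ := #{i | 0 < t i}

lemma posCount_le_card (t : ι → ℝ) : posCount t ≤ Fintype.card ι :=
  card_filter_le _ _

lemma posCount_smul {c : ℝ} (hc : 0 < c) (t : ι → ℝ) : posCount (c • t) = posCount t := by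
  simp only [posCount, Pi.smul_apply, smul_pos_iff_of_pos_left hc]

lemma sum_posIndicator (t : ι → ℝ) : ∑ i, posIndicator t i = posCount t := by
  simp only [posIndicator, posCount, sum_boole]

lemma sum_le_posCount {t : ι → ℝ} (ht : t ≤ 1) : ∑ i, t i ≤ posCount t := by
  rw [← sum_posIndicator]
  exact sum_le_sum fun i _ => le_posIndicator ht i

end PosCount

section LP

variable {m s k : ℕ} (X : Matrix (Fin m) (Fin k) ℝ) (Y : Matrix (Fin s) (Fin k) ℝ)
  (x₀ : Fin m → ℝ) (y₀ : Fin s → ℝ)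

/-- `(μ, s⁻, s⁺)` witnesses that `(x₀ - s⁻, y₀ + s⁺) ∈ Ω₀`. -/
def InOmega₀ (μ : Fin k → ℝ) (sm : Fin m → ℝ) (sp : Fin s → ℝ) : Prop :=
  0 ≤ μ ∧ ∑ j, μ j = 1 ∧ 0 ≤ sm ∧ 0 ≤ sp ∧ X.mulVec μ + sm ≤ x₀ ∧ y₀ ≤ Y.mulVec μ - sp

variable {X Y x₀ y₀}

lemma Feasible.sum_pos {δ : Fin k → ℝ} {tm : Fin m → ℝ} {tp : Fin s → ℝ}
    (h : Feasible X Y x₀ y₀ δ tm tp) : 0 < ∑ j, δ j :=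
  one_pos.trans_le h.2.1

lemma Feasible.inOmega₀ {δ : Fin k → ℝ} {tm : Fin m → ℝ} {tp : Fin s → ℝ}
    (h : Feasible X Y x₀ y₀ δ tm tp) :
    InOmega₀ X Y x₀ y₀ ((∑ j, δ j)⁻¹ • δ) ((∑ j, δ j)⁻¹ • tm) ((∑ j, δ j)⁻¹ • tp) := by
  have hσ : 0 < ∑ j, δ j := h.sum_pos
  obtain ⟨hδ, -, hx, hy, htm, -, htp, -⟩ := h
  have hσinv : 0 ≤ (∑ j, δ j)⁻¹ := inv_nonneg.2 hσ.le
  have hcancel : (∑ j, δ j)⁻¹ * ∑ j, δ j = 1 := inv_mul_cancel₀ hσ.ne'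
  refine ⟨smul_nonneg hσinv hδ, ?_, smul_nonneg hσinv htm, smul_nonneg hσinv htp, ?_, ?_⟩
  · simp only [Pi.smul_apply, smul_eq_mul, ← mul_sum, hcancel]
  · calc X.mulVec ((∑ j, δ j)⁻¹ • δ) + (∑ j, δ j)⁻¹ • tm
          = (∑ j, δ j)⁻¹ • (X.mulVec δ + tm) := by rw [Matrix.mulVec_smul, smul_add]
      _ ≤ (∑ j, δ j)⁻¹ • (∑ j, δ j) • x₀ := smul_le_smul_of_nonneg_left hx hσinv
      _ = x₀ := by rw [smul_smul, hcancel, one_smul]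
  · calc y₀ = (∑ j, δ j)⁻¹ • (∑ j, δ j) • y₀ := by rw [smul_smul, hcancel, one_smul]
      _ ≤ (∑ j, δ j)⁻¹ • (Y.mulVec δ - tp) := smul_le_smul_of_nonneg_left hy hσinv
      _ = Y.mulVec ((∑ j, δ j)⁻¹ • δ) - (∑ j, δ j)⁻¹ • tp := by
        rw [Matrix.mulVec_smul, smul_sub]

lemma InOmega₀.feasible_smul {μ : Fin k → ℝ} {sm tm : Fin m → ℝ} {sp tp : Fin s → ℝ} {L : ℝ}
    (h : InOmega₀ X Y x₀ y₀ μ sm sp) (hL : 1 ≤ L) (htm : tm ≤ L • sm) (htp : tp ≤ L • sp)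
    (htm0 : 0 ≤ tm) (htm1 : tm ≤ 1) (htp0 : 0 ≤ tp) (htp1 : tp ≤ 1) :
    Feasible X Y x₀ y₀ (L • μ) tm tp := by
  obtain ⟨hμ, hμ1, -, -, hx, hy⟩ := h
  have hL0 : 0 ≤ L := zero_le_one.trans hL
  have hsum : ∑ j, (L • μ) j = L := by
    simp only [Pi.smul_apply, smul_eq_mul, ← mul_sum, hμ1, mul_one]
  refine ⟨smul_nonneg hL0 hμ, hL.trans hsum.ge, ?_, ?_, htm0, htm1, htp0, htp1⟩
  · calc X.mulVec (L • μ) + tm ≤ L • X.mulVec μ + L • sm := by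
          rw [Matrix.mulVec_smul]; exact add_le_add_right htm _
      _ = L • (X.mulVec μ + sm) := (smul_add L _ _).symm
      _ ≤ L • x₀ := smul_le_smul_of_nonneg_left hx hL0
      _ = (∑ j, (L • μ) j) • x₀ := by rw [hsum]
  · calc (∑ j, (L • μ) j) • y₀ = L • y₀ := by rw [hsum]
      _ ≤ L • (Y.mulVec μ - sp) := smul_le_smul_of_nonneg_left hy hL0
      _ = L • Y.mulVec μ - L • sp := smul_sub L _ _
      _ ≤ Y.mulVec (L • μ) - tp := by
          rw [Matrix.mulVec_smul]; exact sub_le_sub_left htp _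

lemma InOmega₀.exists_feasible_posIndicator {μ : Fin k → ℝ} {sm : Fin m → ℝ} {sp : Fin s → ℝ}
    (h : InOmega₀ X Y x₀ y₀ μ sm sp) :
    ∃ δ, Feasible X Y x₀ y₀ δ (posIndicator sm) (posIndicator sp) := by
  have hsm : 0 ≤ sm := h.2.2.1
  have hsp : 0 ≤ sp := h.2.2.2.1
  -- `0⁻¹ = 0` in Lean, so the zero slacks contribute nothing to these sums.
  have hinv_sm : ∀ i, (sm i)⁻¹ ≤ ∑ i, (sm i)⁻¹ := fun i =>
    single_le_sum (fun i _ => inv_nonneg.2 (hsm i)) (mem_univ i)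
  have hinv_sp : ∀ r, (sp r)⁻¹ ≤ ∑ r, (sp r)⁻¹ := fun r =>
    single_le_sum (fun r _ => inv_nonneg.2 (hsp r)) (mem_univ r)
  have hA : 0 ≤ ∑ i, (sm i)⁻¹ := sum_nonneg fun i _ => inv_nonneg.2 (hsm i)
  have hB : 0 ≤ ∑ r, (sp r)⁻¹ := sum_nonneg fun r _ => inv_nonneg.2 (hsp r)
  refine ⟨_, h.feasible_smul (L := 1 + ∑ i, (sm i)⁻¹ + ∑ r, (sp r)⁻¹) (by linarith)
    (posIndicator_le_smul hsm fun i => by linarith [hinv_sm i])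
    (posIndicator_le_smul hsp fun r => by linarith [hinv_sp r])
    (posIndicator_nonneg sm) (posIndicator_le_one sm)
    (posIndicator_nonneg sp) (posIndicator_le_one sp)⟩

lemma InOmega₀.exists_feasible_objective_eq {μ : Fin k → ℝ} {sm : Fin m → ℝ} {sp : Fin s → ℝ}
    (h : InOmega₀ X Y x₀ y₀ μ sm sp) : ∃ δ tm tp, Feasible X Y x₀ y₀ δ tm tp ∧
      ∑ i, tm i + ∑ r, tp r = (posCount sm + posCount sp : ℕ) := by
  obtain ⟨δ, hδ⟩ := h.exists_feasible_posIndicator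
  refine ⟨δ, _, _, hδ, ?_⟩
  rw [sum_posIndicator, sum_posIndicator, Nat.cast_add]

lemma Feasible.objective_le_posCount {δ : Fin k → ℝ} {tm : Fin m → ℝ} {tp : Fin s → ℝ}
    (h : Feasible X Y x₀ y₀ δ tm tp) : ∑ i, tm i + ∑ r, tp r ≤
      (posCount ((∑ j, δ j)⁻¹ • tm) + posCount ((∑ j, δ j)⁻¹ • tp) : ℕ) := by
  rw [posCount_smul (inv_pos.2 h.sum_pos), posCount_smul (inv_pos.2 h.sum_pos), Nat.cast_add]
  exact add_le_add (sum_le_posCount h.2.2.2.2.2.1) (sum_le_posCount h.2.2.2.2.2.2.2)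

end LP

theorem stmt_7_general {m s k : ℕ} (X : Matrix (Fin m) (Fin k) ℝ) (Y : Matrix (Fin s) (Fin k) ℝ)
    (x₀ : Fin m → ℝ) (y₀ : Fin s → ℝ)
    (hne : ∃ δ tm tp, Feasible X Y x₀ y₀ δ tm tp) :
    (∃ δ tm tp, Feasible X Y x₀ y₀ δ tm tp ∧
      ∀ δ' tm' tp', Feasible X Y x₀ y₀ δ' tm' tp' →
        ∑ i, tm' i + ∑ r, tp' r ≤ ∑ i, tm i + ∑ r, tp r) ∧
    (∀ δ tm tp, Feasible X Y x₀ y₀ δ tm tp →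
      (∀ δ' tm' tp', Feasible X Y x₀ y₀ δ' tm' tp' →
        ∑ i, tm' i + ∑ r, tp' r ≤ ∑ i, tm i + ∑ r, tp r) →
      let σ := ∑ j, δ j
      (∃ μ : Fin k → ℝ, 0 ≤ μ ∧ ∑ j, μ j = 1 ∧ 0 ≤ σ⁻¹ • tm ∧ 0 ≤ σ⁻¹ • tp ∧
        X.mulVec μ + σ⁻¹ • tm ≤ x₀ ∧ y₀ ≤ Y.mulVec μ - σ⁻¹ • tp) ∧
      (∀ (μ : Fin k → ℝ) (sm : Fin m → ℝ) (sp : Fin s → ℝ),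
        0 ≤ μ → ∑ j, μ j = 1 → 0 ≤ sm → 0 ≤ sp →
        X.mulVec μ + sm ≤ x₀ → y₀ ≤ Y.mulVec μ - sp →
        (Finset.univ.filter fun i => 0 < sm i).card +
          (Finset.univ.filter fun r => 0 < sp r).card ≤
        (Finset.univ.filter fun i => 0 < (σ⁻¹ • tm) i).card +
          (Finset.univ.filter fun r => 0 < (σ⁻¹ • tp) r).card)) := by
  refine ⟨?_, fun δ tm tp hδ hopt => ⟨⟨_, hδ.inOmega₀⟩, fun μ sm sp hμ hμ1 hsm hsp hx hy => ?_⟩⟩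
  · obtain ⟨⟨μ, sm, sp⟩, hΩ, hmax⟩ := exists_max_of_forall_le
      (p := fun v : (Fin k → ℝ) × (Fin m → ℝ) × (Fin s → ℝ) => InOmega₀ X Y x₀ y₀ v.1 v.2.1 v.2.2)
      (fun v => posCount v.2.1 + posCount v.2.2)
      (fun v _ => add_le_add (posCount_le_card _) (posCount_le_card _))
      (hne.elim fun _ h => h.elim fun _ h => h.elim fun _ h => ⟨(_, _, _), h.inOmega₀⟩)
    obtain ⟨δ, tm, tp, hδ, hval⟩ := hΩ.exists_feasible_objective_eq
    refine ⟨δ, tm, tp, hδ, fun δ' tm' tp' hδ' => hδ'.objective_le_posCount.trans ?_⟩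
    rw [hval]
    exact_mod_cast hmax (_, _, _) hδ'.inOmega₀
  · obtain ⟨δ', tm', tp', hδ', hval⟩ :=
      InOmega₀.exists_feasible_objective_eq ⟨hμ, hμ1, hsm, hsp, hx, hy⟩
    exact_mod_cast (hval ▸ hopt δ' tm' tp' hδ').trans hδ.objective_le_posCount

/-- If the LP (15) is feasible it attains its maximum, and at any optimum
`(δ*, t⁻*, t⁺*)`, the point `(x₀ - t⁻*/σ*, y₀ + t⁺*/σ*)` with `σ* = 1ᵀδ*`
lies in `Ω₀` and maximizes over `Ω₀` the total number of positive slack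
components. -/
theorem stmt_7 {m s k : ℕ} (X : Matrix (Fin m) (Fin k) ℝ) (Y : Matrix (Fin s) (Fin k) ℝ)
    (hX : ∀ i j, 0 ≤ X i j) (hY : ∀ i j, 0 ≤ Y i j)
    (x₀ : Fin m → ℝ) (y₀ : Fin s → ℝ) (hx₀ : 0 ≤ x₀) (hy₀ : 0 ≤ y₀)
    (hne : ∃ δ tm tp, Feasible X Y x₀ y₀ δ tm tp) :
    (∃ δ tm tp, Feasible X Y x₀ y₀ δ tm tp ∧
      ∀ δ' tm' tp', Feasible X Y x₀ y₀ δ' tm' tp' →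
        ∑ i, tm' i + ∑ r, tp' r ≤ ∑ i, tm i + ∑ r, tp r) ∧
    (∀ δ tm tp, Feasible X Y x₀ y₀ δ tm tp →
      (∀ δ' tm' tp', Feasible X Y x₀ y₀ δ' tm' tp' →
        ∑ i, tm' i + ∑ r, tp' r ≤ ∑ i, tm i + ∑ r, tp r) →
      let σ := ∑ j, δ j
      (∃ μ : Fin k → ℝ, 0 ≤ μ ∧ ∑ j, μ j = 1 ∧ 0 ≤ σ⁻¹ • tm ∧ 0 ≤ σ⁻¹ • tp ∧
        X.mulVec μ + σ⁻¹ • tm ≤ x₀ ∧ y₀ ≤ Y.mulVec μ - σ⁻¹ • tp) ∧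
      (∀ (μ : Fin k → ℝ) (sm : Fin m → ℝ) (sp : Fin s → ℝ),
        0 ≤ μ → ∑ j, μ j = 1 → 0 ≤ sm → 0 ≤ sp →
        X.mulVec μ + sm ≤ x₀ → y₀ ≤ Y.mulVec μ - sp →
        (Finset.univ.filter fun i => 0 < sm i).card +
          (Finset.univ.filter fun r => 0 < sp r).card ≤
        (Finset.univ.filter fun i => 0 < (σ⁻¹ • tm) i).card +
          (Finset.univ.filter fun r => 0 < (σ⁻¹ • tp) r).card)) :=
  stmt_7_general X Y x₀ y₀ hne
end

section
/- Let Ω₀ = { (x₀-s⁻, y₀+s⁺) : ∃ μ ≥ 0, 1ᵀμ = 1, s⁻, s⁺ ≥ 0, Xμ + s⁻ ≤ x₀, Yμ - s⁺ ≥ y₀ } where X, Y are the leave-one-out data matrices. Then (x₀, y₀) is strongly Pareto efficient with respect to the full VRS technology T = { (x,y) ≥ 0 : ∃ λ ≥ 0, 1ᵀλ = 1, [X x₀]λ ≤ x, [Y y₀]λ ≥ y } if and only if Ω₀ \ {(x₀,y₀)} = ∅. -/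
/-!
A point of `Ω₀` with nonzero slacks `(s⁻, s⁺)` yields the point `(x₀ - s⁻, y₀ + s⁺)` of the
technology, generated by the other columns alone, which dominates `(x₀, y₀)`. Conversely, let
`(x, y)` dominate `(x₀, y₀)` with weight `λ₀` on the column `(x₀, y₀)`. If `λ₀ = 1` then
`(x, y) = (x₀, y₀)`; otherwise moving `λ₀ (x₀, y₀)` to the other side and dividing by `1 - λ₀`
gives a point of `Ω₀` with slacks `(x₀ - x, y - y₀) / (1 - λ₀)`, which must vanish.
-/

open Matrix

section OrderedModule

variable {𝕜 E : Type*} [Field 𝕜] [LinearOrder 𝕜] [IsStrictOrderedRing 𝕜]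
  [AddCommGroup E] [PartialOrder E] [IsOrderedAddMonoid E] [Module 𝕜 E] [PosSMulMono 𝕜 E]
  {c : 𝕜} {a x x₀ : E}

theorem inv_one_sub_smul_add_le_of_add_smul_le (hc : c < 1) (h : a + c • x₀ ≤ x) :
    (1 - c)⁻¹ • a + (1 - c)⁻¹ • (x₀ - x) ≤ x₀ := by
  rw [← smul_add, inv_smul_le_iff_of_pos (sub_pos.2 hc), sub_smul, one_smul, ← sub_nonneg]
  convert sub_nonneg.2 h using 1
  abel

theorem le_inv_one_sub_smul_sub_of_le_add_smul (hc : c < 1) (h : x ≤ a + c • x₀) :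
    x₀ ≤ (1 - c)⁻¹ • a - (1 - c)⁻¹ • (x - x₀) := by
  rw [← smul_sub, le_inv_smul_iff_of_pos (sub_pos.2 hc), sub_smul, one_smul, ← sub_nonneg]
  convert sub_nonneg.2 h using 1
  abel

end OrderedModule

theorem sum_inv_one_sub_smul_eq_one {ι 𝕜 : Type*} [Fintype ι] [Field 𝕜] {w : ι → 𝕜} {c : 𝕜}
    (hsum : ∑ i, w i + c = 1) (hc : c ≠ 1) : ∑ i, ((1 - c)⁻¹ • w) i = 1 := by
  simp only [Pi.smul_apply, smul_eq_mul, ← Finset.mul_sum, eq_sub_of_add_eq hsum]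
  exact inv_mul_cancel₀ (sub_ne_zero.2 hc.symm)

theorem Matrix.mulVec_nonneg {m n R : Type*} [Fintype n] [Semiring R] [PartialOrder R]
    [IsOrderedRing R] {X : Matrix m n R} (hX : ∀ i j, 0 ≤ X i j) {μ : n → R} (hμ : 0 ≤ μ) :
    0 ≤ X *ᵥ μ :=
  fun i ↦ dotProduct_nonneg_of_nonneg (fun j ↦ hX i j) hμ

theorem stmt_9_general {m s k : ℕ} (X : Matrix (Fin m) (Fin k) ℝ) (Y : Matrix (Fin s) (Fin k) ℝ)
    (hX : ∀ i j, 0 ≤ X i j)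
    (x₀ : Fin m → ℝ) (y₀ : Fin s → ℝ) (hy₀ : 0 ≤ y₀) :
    (¬ ∃ x y, (0 ≤ x ∧ 0 ≤ y ∧
        ∃ (lam : Fin k → ℝ) (lam₀ : ℝ), 0 ≤ lam ∧ 0 ≤ lam₀ ∧ (∑ j, lam j) + lam₀ = 1 ∧
          X.mulVec lam + lam₀ • x₀ ≤ x ∧ y ≤ Y.mulVec lam + lam₀ • y₀) ∧
      x ≤ x₀ ∧ y₀ ≤ y ∧ (x, y) ≠ (x₀, y₀)) ↔
    (∀ (μ : Fin k → ℝ) (sm : Fin m → ℝ) (sp : Fin s → ℝ),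
      0 ≤ μ → ∑ j, μ j = 1 → 0 ≤ sm → 0 ≤ sp →
      X.mulVec μ + sm ≤ x₀ → y₀ ≤ Y.mulVec μ - sp → sm = 0 ∧ sp = 0) := by
  constructor
  · intro h μ sm sp hμ hsum hsm hsp hxΩ hyΩ
    by_contra hslack
    refine h ⟨x₀ - sm, y₀ + sp, ⟨?_, ?_, μ, 0, hμ, le_rfl, by simpa using hsum, ?_, ?_⟩,
      sub_le_self _ hsm, le_add_of_nonneg_right hsp, fun heq ↦ hslack (by simpa using heq)⟩
    · exact sub_nonneg.2 ((le_add_of_nonneg_left (mulVec_nonneg hX hμ)).trans hxΩ)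
    · exact add_nonneg hy₀ hsp
    · simpa [le_sub_iff_add_le] using hxΩ
    · simpa [add_comm, ← le_sub_iff_add_le] using hyΩ
  · rintro h ⟨x, y, ⟨-, -, lam, lam₀, hlam, -, hsum, hxT, hyT⟩, hxx₀, hy₀y, hne⟩
    have hlam₀ : lam₀ ≤ 1 := by linarith [Fintype.sum_nonneg hlam]
    obtain hlt | rfl := hlam₀.lt_or_eq
    · have ht : 0 < (1 - lam₀)⁻¹ := inv_pos.2 (sub_pos.2 hlt)
      obtain ⟨hsm, hsp⟩ := h ((1 - lam₀)⁻¹ • lam) ((1 - lam₀)⁻¹ • (x₀ - x))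
        ((1 - lam₀)⁻¹ • (y - y₀)) (smul_nonneg ht.le hlam)
        (sum_inv_one_sub_smul_eq_one hsum hlt.ne)
        (smul_nonneg ht.le (sub_nonneg.2 hxx₀)) (smul_nonneg ht.le (sub_nonneg.2 hy₀y))
        (by rw [mulVec_smul]; exact inv_one_sub_smul_add_le_of_add_smul_le hlt hxT)
        (by rw [mulVec_smul]; exact le_inv_one_sub_smul_sub_of_le_add_smul hlt hyT)
      rw [smul_eq_zero_iff_right ht.ne', sub_eq_zero] at hsm hsp
      exact hne (by rw [hsm, hsp])
    · have hlam0 : lam = 0 := (Fintype.sum_eq_zero_iff_of_nonneg hlam).1 (by linarith)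
      simp only [hlam0, mulVec_zero, zero_add, one_smul] at hxT hyT
      exact hne (by rw [le_antisymm hxx₀ hxT, le_antisymm hyT hy₀y])

/-- `(x₀, y₀)` is strongly Pareto efficient with respect to the full VRS
technology (generated by the leave-one-out columns of `X, Y` together with
the column `(x₀, y₀)`) iff `Ω₀ \ {(x₀, y₀)} = ∅`, i.e. every element of
`Ω₀` has zero slacks. -/
theorem stmt_9 {m s k : ℕ} (X : Matrix (Fin m) (Fin k) ℝ) (Y : Matrix (Fin s) (Fin k) ℝ)
    (hX : ∀ i j, 0 ≤ X i j) (hY : ∀ i j, 0 ≤ Y i j)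
    (x₀ : Fin m → ℝ) (y₀ : Fin s → ℝ) (hx₀ : 0 ≤ x₀) (hy₀ : 0 ≤ y₀) :
    (¬ ∃ x y, (0 ≤ x ∧ 0 ≤ y ∧
        ∃ (lam : Fin k → ℝ) (lam₀ : ℝ), 0 ≤ lam ∧ 0 ≤ lam₀ ∧ (∑ j, lam j) + lam₀ = 1 ∧
          X.mulVec lam + lam₀ • x₀ ≤ x ∧ y ≤ Y.mulVec lam + lam₀ • y₀) ∧
      x ≤ x₀ ∧ y₀ ≤ y ∧ (x, y) ≠ (x₀, y₀)) ↔
    (∀ (μ : Fin k → ℝ) (sm : Fin m → ℝ) (sp : Fin s → ℝ),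
      0 ≤ μ → ∑ j, μ j = 1 → 0 ≤ sm → 0 ≤ sp →
      X.mulVec μ + sm ≤ x₀ → y₀ ≤ Y.mulVec μ - sp → sm = 0 ∧ sp = 0) :=
  stmt_9_general X Y hX x₀ y₀ hy₀
end

section
/- Let T be the VRS technology generated by n observed points and suppose (x₀,y₀) is one of the observations. If (x₀,y₀) is dominated in the Pareto sense by some point of T other than itself (i.e., ∃(x,y) ∈ T, (x,y) ≠ (x₀,y₀), x ≤ x₀, y ≥ y₀), then it is dominated by a point of the form (x₀ - s⁻, y₀ + s⁺) ∈ Ω₀ with (s⁻, s⁺) ≩ 0, where Ω₀ is built from the leave-one-out technology; i.e., the dominating activity can be taken to be a convex combination of the other n-1 observations. -/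
/-!
A convex combination `λ` dominating observation `o` cannot put all its weight on `o`: it would
then produce exactly `(x₀, y₀)` and squeeze the dominating point onto `(x₀, y₀)`. Otherwise
`λ = λₒ eₒ + (1 - λₒ) μ` with `μ` a convex combination of the other observations, so that
`Xλ - x₀ = (1 - λₒ)(Xμ - x₀)` and `Yλ - y₀ = (1 - λₒ)(Yμ - y₀)`. Hence `μ` dominates `(x₀, y₀)`
as well, and zero slacks for `μ` would force `Xλ = x₀`, `Yλ = y₀`, which was just excluded.
-/
open Finset Matrix

lemma Function.update_zero_eq_sub_single {ι G : Type*} [DecidableEq ι] [AddGroup G]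
    (f : ι → G) (o : ι) : Function.update f o 0 = f - Pi.single o (f o) := by
  simp [Pi.update_eq_sub_add_single]

section
variable {𝕜 ι κ : Type*}

section Order
variable [Field 𝕜] [LinearOrder 𝕜] [IsStrictOrderedRing 𝕜] {lam : ι → 𝕜} {o : ι}

lemma apply_le_one_of_sum_eq_one [Fintype ι] (hlam : 0 ≤ lam) (hsum : ∑ j, lam j = 1) (o : ι) :
    lam o ≤ 1 :=
  hsum ▸ single_le_sum (fun j _ => hlam j) (mem_univ o)

lemma eq_single_of_apply_eq_one [Fintype ι] [DecidableEq ι] (hlam : 0 ≤ lam)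
    (hsum : ∑ j, lam j = 1) (ho : lam o = 1) : lam = Pi.single o 1 := by
  have hrest : ∑ j ∈ univ.erase o, lam j = 0 := by
    linarith [add_sum_erase univ lam (mem_univ o)]
  ext j
  rcases eq_or_ne j o with rfl | hj
  · simp [ho]
  · rw [Pi.single_eq_of_ne hj]
    exact (sum_eq_zero_iff_of_nonneg fun k _ => hlam k).1 hrest j (mem_erase.2 ⟨hj, mem_univ j⟩)

end Order

variable [DecidableEq ι]

/-- The rescaling `λⱼ / (1 - λₒ)` of the weights off `o`; junk (zero) when `lam o = 1`. -/
def leaveOneOut [Field 𝕜] (lam : ι → 𝕜) (o : ι) : ι → 𝕜 :=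
  (1 - lam o)⁻¹ • Function.update lam o 0

section Field
variable [Field 𝕜] {lam : ι → 𝕜} {o : ι}

@[simp]
lemma leaveOneOut_apply_self : leaveOneOut lam o o = 0 := by
  simp [leaveOneOut]

lemma sum_leaveOneOut [Fintype ι] (hsum : ∑ j, lam j = 1) (ho : lam o ≠ 1) :
    ∑ j, leaveOneOut lam o j = 1 := by
  have hc : 1 - lam o ≠ 0 := sub_ne_zero.2 ho.symm
  simp [leaveOneOut, ← mul_sum, Function.update_zero_eq_sub_single, sum_sub_distrib, hsum, hc]

lemma mulVec_sub_col_eq_smul [Fintype ι] (A : Matrix κ ι 𝕜) (ho : lam o ≠ 1) :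
    A *ᵥ lam - A.col o = (1 - lam o) • (A *ᵥ leaveOneOut lam o - A.col o) := by
  have hc : 1 - lam o ≠ 0 := sub_ne_zero.2 ho.symm
  rw [leaveOneOut, mulVec_smul, smul_sub, smul_inv_smul₀ hc, Function.update_zero_eq_sub_single,
    mulVec_sub, mulVec_single]
  ext i
  simp only [Pi.sub_apply, Pi.smul_apply, col_apply, MulOpposite.smul_eq_mul_unop,
    MulOpposite.unop_op, smul_eq_mul]
  ring

end Field

lemma leaveOneOut_nonneg [Field 𝕜] [LinearOrder 𝕜] [IsStrictOrderedRing 𝕜] {lam : ι → 𝕜} {o : ι}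
    (hlam : 0 ≤ lam) (ho : lam o ≤ 1) : 0 ≤ leaveOneOut lam o := by
  refine smul_nonneg (inv_nonneg.2 (sub_nonneg.2 ho)) fun j => ?_
  rcases eq_or_ne j o with rfl | hj
  · simp
  · simpa [hj] using hlam j

end

theorem stmt_12_general {m s n : ℕ} (X : Matrix (Fin m) (Fin n) ℝ) (Y : Matrix (Fin s) (Fin n) ℝ)
    (o : Fin n) (x₀ : Fin m → ℝ) (y₀ : Fin s → ℝ)
    (hx₀ : x₀ = fun i => X i o) (hy₀ : y₀ = fun r => Y r o)
    (hdom : ∃ x y, (0 ≤ x ∧ 0 ≤ y ∧ ∃ lam : Fin n → ℝ, 0 ≤ lam ∧ ∑ j, lam j = 1 ∧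
        X.mulVec lam ≤ x ∧ y ≤ Y.mulVec lam) ∧
      (x, y) ≠ (x₀, y₀) ∧ x ≤ x₀ ∧ y₀ ≤ y) :
    ∃ (μ : Fin n → ℝ) (sm : Fin m → ℝ) (sp : Fin s → ℝ),
      0 ≤ μ ∧ μ o = 0 ∧ ∑ j, μ j = 1 ∧ 0 ≤ sm ∧ 0 ≤ sp ∧ ¬(sm = 0 ∧ sp = 0) ∧
      X.mulVec μ + sm ≤ x₀ ∧ y₀ ≤ Y.mulVec μ - sp := by
  obtain ⟨x, y, ⟨-, -, lam, hlam, hsum, hXx, hyY⟩, hne, hxx₀, hy₀y⟩ := hdom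
  change x₀ = X.col o at hx₀
  change y₀ = Y.col o at hy₀
  subst hx₀ hy₀
  have hcollapse : X *ᵥ lam = X.col o → Y *ᵥ lam ≠ Y.col o := fun hX hY =>
    hne (Prod.ext (le_antisymm hxx₀ (hX ▸ hXx)) (le_antisymm (hY ▸ hyY) hy₀y))
  have hlt : lam o < 1 := (apply_le_one_of_sum_eq_one hlam hsum o).lt_of_ne fun ho => by
    rw [eq_single_of_apply_eq_one hlam hsum ho] at hcollapse
    exact hcollapse (mulVec_single_one X o) (mulVec_single_one Y o)
  have hc : 0 < 1 - lam o := sub_pos.2 hlt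
  have hX := mulVec_sub_col_eq_smul X hlt.ne
  have hY := mulVec_sub_col_eq_smul Y hlt.ne
  set μ := leaveOneOut lam o
  have hXμ : X *ᵥ μ ≤ X.col o := by
    rw [← sub_nonpos, ← smul_nonpos_iff_nonpos_of_pos_left hc, ← hX, sub_nonpos]
    exact hXx.trans hxx₀
  have hYμ : Y.col o ≤ Y *ᵥ μ := by
    rw [← sub_nonneg, ← smul_nonneg_iff_nonneg_of_pos_left hc, ← hY, sub_nonneg]
    exact hy₀y.trans hyY
  refine ⟨μ, X.col o - X *ᵥ μ, Y *ᵥ μ - Y.col o, leaveOneOut_nonneg hlam hlt.le,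
    leaveOneOut_apply_self, sum_leaveOneOut hsum hlt.ne, sub_nonneg.2 hXμ, sub_nonneg.2 hYμ,
    ?_, by simp, by simp⟩
  rintro ⟨hsm, hsp⟩
  refine hcollapse (sub_eq_zero.1 ?_) (sub_eq_zero.1 ?_)
  · rw [hX, sub_eq_zero.1 hsm, sub_self, smul_zero]
  · rw [hY, hsp, smul_zero]

/-- If observation `o` is Pareto dominated by some other point of the full
VRS technology `T`, then it is dominated by a point of `Ω₀`, i.e. by a
convex combination of the other observations (a weight vector vanishing at
`o`) with nonzero slack vector. -/
theorem stmt_12 {m s n : ℕ} (X : Matrix (Fin m) (Fin n) ℝ) (Y : Matrix (Fin s) (Fin n) ℝ)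
    (hX : ∀ i j, 0 ≤ X i j) (hY : ∀ i j, 0 ≤ Y i j)
    (o : Fin n) (x₀ : Fin m → ℝ) (y₀ : Fin s → ℝ)
    (hx₀ : x₀ = fun i => X i o) (hy₀ : y₀ = fun r => Y r o)
    (hdom : ∃ x y, (0 ≤ x ∧ 0 ≤ y ∧ ∃ lam : Fin n → ℝ, 0 ≤ lam ∧ ∑ j, lam j = 1 ∧
        X.mulVec lam ≤ x ∧ y ≤ Y.mulVec lam) ∧
      (x, y) ≠ (x₀, y₀) ∧ x ≤ x₀ ∧ y₀ ≤ y) :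
    ∃ (μ : Fin n → ℝ) (sm : Fin m → ℝ) (sp : Fin s → ℝ),
      0 ≤ μ ∧ μ o = 0 ∧ ∑ j, μ j = 1 ∧ 0 ≤ sm ∧ 0 ≤ sp ∧ ¬(sm = 0 ∧ sp = 0) ∧
      X.mulVec μ + sm ≤ x₀ ∧ y₀ ≤ Y.mulVec μ - sp :=
  stmt_12_general X Y o x₀ y₀ hx₀ hy₀ hdom
end

section
/- With Ω₀ as above and assuming every component of x₀ is positive, the point (x₀, y₀) is radially input-inefficient relative to the full technology (∃ θ < 1 with (θx₀, y₀) ∈ T) if and only if there exists (x₀-s⁻, y₀+s⁺) ∈ Ω₀ ∪ {(x₀,y₀) via the full technology} with s⁻ > 0 componentwise; in particular, for positive input data, radial input inefficiency is equivalent to the existence of a feasible activity (x,y) ∈ T with x < x₀ componentwise and y ≥ y₀. -/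
/-- For positive input data `x₀ > 0`, radial input inefficiency relative to
the full VRS technology `T` is equivalent to the existence of a feasible
activity `(x, y) ∈ T` with `x < x₀` componentwise and `y ≥ y₀`. -/
theorem stmt_13 {m s n : ℕ} (X : Matrix (Fin m) (Fin n) ℝ) (Y : Matrix (Fin s) (Fin n) ℝ)
    (hX : ∀ i j, 0 ≤ X i j) (hY : ∀ i j, 0 ≤ Y i j)
    (x₀ : Fin m → ℝ) (y₀ : Fin s → ℝ) (hx₀pos : ∀ i, 0 < x₀ i) (hy₀ : 0 ≤ y₀) :
    let T : Set ((Fin m → ℝ) × (Fin s → ℝ)) :=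
      {p | 0 ≤ p.1 ∧ 0 ≤ p.2 ∧ ∃ lam : Fin n → ℝ, 0 ≤ lam ∧ ∑ j, lam j = 1 ∧
        X.mulVec lam ≤ p.1 ∧ p.2 ≤ Y.mulVec lam}
    ((∃ θ : ℝ, θ < 1 ∧ (θ • x₀, y₀) ∈ T) ↔
      ∃ x y, (x, y) ∈ T ∧ (∀ i, x i < x₀ i) ∧ y₀ ≤ y) := by
  intro T
  constructor
  · rintro ⟨θ, hθ, hmem⟩
    refine ⟨θ • x₀, y₀, hmem, ?_, le_refl _⟩
    intro i
    have : θ * x₀ i < 1 * x₀ i := mul_lt_mul_of_pos_right hθ (hx₀pos i)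
    simpa using this
  · rintro ⟨x, y, ⟨hx0, hy0, lam, hlam0, hlam1, hXl, hYl⟩, hlt, hyy⟩
    rcases isEmpty_or_nonempty (Fin m) with hm | hm
    · refine ⟨0, by norm_num, ?_, hy₀, lam, hlam0, hlam1, ?_, le_trans hyy hYl⟩
      · intro i; exact (hm.false i).elim
      · intro i; exact (hm.false i).elim
    · have hne : (Finset.univ : Finset (Fin m)).Nonempty := Finset.univ_nonempty
      set θ := Finset.univ.sup' hne (fun i => x i / x₀ i) with hθdef
      have hθge : ∀ i, x i / x₀ i ≤ θ := by intro i; rw [hθdef]; exact Finset.le_sup' (fun i => x i / x₀ i) (Finset.mem_univ i)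
      have hθlt : θ < 1 := by
        rw [hθdef, Finset.sup'_lt_iff]
        intro i _
        exact (div_lt_one (hx₀pos i)).mpr (hlt i)
      have hθ0 : 0 ≤ θ := by
        obtain ⟨i⟩ := hm
        exact le_trans (div_nonneg (hx0 i) (hx₀pos i).le) (hθge i)
      refine ⟨θ, hθlt, ?_, hy₀, lam, hlam0, hlam1, ?_, le_trans hyy hYl⟩
      · intro i
        exact mul_nonneg hθ0 (hx₀pos i).le
      · intro i
        have h1 : x i / x₀ i * x₀ i ≤ θ * x₀ i :=
          mul_le_mul_of_nonneg_right (hθge i) (hx₀pos i).le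
        have h2 : x i / x₀ i * x₀ i = x i := div_mul_cancel₀ _ (hx₀pos i).ne'
        calc X.mulVec lam i ≤ x i := hXl i
          _ ≤ θ * x₀ i := h2 ▸ h1
end

section
/- The feasible region of the LP { δ ≥ 0, 1ᵀδ ≥ 1, Xδ + t⁻ ≤ (1ᵀδ)x₀, Yδ - t⁺ ≥ (1ᵀδ)y₀, 0 ≤ t⁻ ≤ 1, 0 ≤ t⁺ ≤ 1 } is closed under the following scaling-and-truncation operation: if (δ, t⁻, t⁺) is feasible and c ≥ 1, then (cδ, min(c·t⁻, 1), min(c·t⁺, 1)) is also feasible, where min is taken componentwise with the all-ones vector. -/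
/-- The feasible region of system (14) is closed under scaling by `c ≥ 1`
with componentwise truncation of the `t`-variables at `1`. -/
theorem stmt_14 {m s k : ℕ} (X : Matrix (Fin m) (Fin k) ℝ) (Y : Matrix (Fin s) (Fin k) ℝ)
    (hX : ∀ i j, 0 ≤ X i j) (hY : ∀ i j, 0 ≤ Y i j)
    (x₀ : Fin m → ℝ) (y₀ : Fin s → ℝ) (hx₀ : 0 ≤ x₀) (hy₀ : 0 ≤ y₀)
    (δ : Fin k → ℝ) (tm : Fin m → ℝ) (tp : Fin s → ℝ)
    (hfeas : Feasible X Y x₀ y₀ δ tm tp) (c : ℝ) (hc : 1 ≤ c) :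
    Feasible X Y x₀ y₀ (c • δ) (fun i => min (c * tm i) 1) (fun r => min (c * tp r) 1) := by
  obtain ⟨hδ, hsum, hin, hout, htm0, htm1, htp0, htp1⟩ := hfeas
  have hc0 : (0:ℝ) ≤ c := le_trans zero_le_one hc
  have hsum' : ∑ j, (c • δ) j = c * ∑ j, δ j := by
    simp [Finset.mul_sum]
  refine ⟨?_, ?_, ?_, ?_, ?_, ?_, ?_, ?_⟩
  · intro j; exact mul_nonneg hc0 (hδ j)
  · rw [hsum']; calc (1:ℝ) = 1 * 1 := by ring
      _ ≤ c * ∑ j, δ j := mul_le_mul hc hsum zero_le_one hc0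
  · intro i
    have h1 : min (c * tm i) 1 ≤ c * tm i := min_le_left _ _
    have h2 : c * (X.mulVec δ i + tm i) ≤ c * ((∑ j, δ j) * x₀ i) :=
      mul_le_mul_of_nonneg_left (hin i) hc0
    have h3 : X.mulVec (c • δ) i = c * X.mulVec δ i := by
      simp [Matrix.mulVec_smul]
    have hin' := hin i
    simp only [Pi.add_apply, Pi.smul_apply, smul_eq_mul] at hin'
    simp only [Pi.add_apply, Pi.smul_apply, smul_eq_mul, h3, ← Finset.mul_sum]
    nlinarith
  · intro r
    have h3 : Y.mulVec (c • δ) r = c * Y.mulVec δ r := by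
      simp [Matrix.mulVec_smul]
    have h1 : min (c * tp r) 1 ≤ c * tp r := min_le_left _ _
    have hout' := hout r
    simp only [Pi.sub_apply, Pi.smul_apply, smul_eq_mul] at hout'
    simp only [Pi.sub_apply, Pi.smul_apply, smul_eq_mul, h3, ← Finset.mul_sum]
    nlinarith
  · intro i; simp only [Pi.zero_apply]
    exact le_min (mul_nonneg hc0 (htm0 i)) zero_le_one
  · intro i; exact min_le_right _ _
  · intro r; simp only [Pi.zero_apply]
    exact le_min (mul_nonneg hc0 (htp0 r)) zero_le_one
  · intro r; exact min_le_right _ _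
end

section
/- Suppose there exists μ ≥ 0 with 1ᵀμ = 1 such that X₀μ < x₀ and Y₀μ > y₀ componentwise (strict in every coordinate). Then the LP max 1ᵀt⁻ + 1ᵀt⁺ subject to the system (14) attains its maximum value m + s. -/
/-- If some convex combination of the other observations strictly dominates
`(x₀, y₀)` in every coordinate, then the LP (15) attains its maximum value
`m + s`. -/
theorem stmt_16 {m s k : ℕ} (X : Matrix (Fin m) (Fin k) ℝ) (Y : Matrix (Fin s) (Fin k) ℝ)
    (hX : ∀ i j, 0 ≤ X i j) (hY : ∀ i j, 0 ≤ Y i j)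
    (x₀ : Fin m → ℝ) (y₀ : Fin s → ℝ) (hx₀ : 0 ≤ x₀) (hy₀ : 0 ≤ y₀)
    (μ : Fin k → ℝ) (hμ : 0 ≤ μ) (hμ1 : ∑ j, μ j = 1)
    (hin : ∀ i, X.mulVec μ i < x₀ i) (hout : ∀ r, y₀ r < Y.mulVec μ r) :
    ∃ δ tm tp, Feasible X Y x₀ y₀ δ tm tp ∧
      ∑ i, tm i + ∑ r, tp r = (m : ℝ) + s ∧
      ∀ δ' tm' tp', Feasible X Y x₀ y₀ δ' tm' tp' →
        ∑ i, tm' i + ∑ r, tp' r ≤ (m : ℝ) + s := by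
  set a : Fin m → ℝ := fun i => x₀ i - X.mulVec μ i with ha
  set b : Fin s → ℝ := fun r => Y.mulVec μ r - y₀ r with hb
  have hapos : ∀ i, 0 < a i := fun i => sub_pos.2 (hin i)
  have hbpos : ∀ r, 0 < b r := fun r => sub_pos.2 (hout r)
  set σ : ℝ := 1 + ∑ i, (a i)⁻¹ + ∑ r, (b r)⁻¹ with hσ
  have hsa : 0 ≤ ∑ i, (a i)⁻¹ :=
    Finset.sum_nonneg fun i _ => inv_nonneg.2 (hapos i).le
  have hsb : 0 ≤ ∑ r, (b r)⁻¹ :=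
    Finset.sum_nonneg fun r _ => inv_nonneg.2 (hbpos r).le
  have hσ1 : 1 ≤ σ := by rw [hσ]; linarith
  have hσ0 : 0 ≤ σ := by linarith
  have keya : ∀ i, 1 ≤ σ * a i := by
    intro i
    have h1 : (a i)⁻¹ ≤ ∑ i, (a i)⁻¹ :=
      Finset.single_le_sum (fun j _ => inv_nonneg.2 (hapos j).le) (Finset.mem_univ i)
    have h2 : (a i)⁻¹ ≤ σ := by rw [hσ]; linarith
    calc (1:ℝ) = (a i)⁻¹ * a i := (inv_mul_cancel₀ (hapos i).ne').symm
      _ ≤ σ * a i := mul_le_mul_of_nonneg_right h2 (hapos i).le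
  have keyb : ∀ r, 1 ≤ σ * b r := by
    intro r
    have h1 : (b r)⁻¹ ≤ ∑ r, (b r)⁻¹ :=
      Finset.single_le_sum (fun j _ => inv_nonneg.2 (hbpos j).le) (Finset.mem_univ r)
    have h2 : (b r)⁻¹ ≤ σ := by rw [hσ]; linarith
    calc (1:ℝ) = (b r)⁻¹ * b r := (inv_mul_cancel₀ (hbpos r).ne').symm
      _ ≤ σ * b r := mul_le_mul_of_nonneg_right h2 (hbpos r).le
  have hsum : ∑ j, (σ • μ) j = σ := by
    simp [smul_eq_mul, ← Finset.mul_sum, hμ1]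
  refine ⟨σ • μ, 1, 1, ⟨?_, ?_, ?_, ?_, ?_, le_refl _, ?_, le_refl _⟩, ?_, ?_⟩
  · intro j
    exact mul_nonneg hσ0 (hμ j)
  · rw [hsum]; exact hσ1
  · intro i
    have h := keya i
    simp only [Matrix.mulVec_smul, Pi.add_apply, Pi.smul_apply, Pi.one_apply,
      smul_eq_mul, ha] at *
    rw [hsum]
    nlinarith
  · intro r
    have h := keyb r
    simp only [Matrix.mulVec_smul, Pi.sub_apply, Pi.smul_apply, Pi.one_apply,
      smul_eq_mul, hb] at *
    rw [hsum]
    nlinarith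
  · intro i; simp
  · intro r; simp
  · simp
  · rintro δ' tm' tp' ⟨-, -, -, -, -, htm1, -, htp1⟩
    have h1 : ∑ i, tm' i ≤ (m : ℝ) := by
      calc ∑ i, tm' i ≤ ∑ _i : Fin m, (1:ℝ) :=
            Finset.sum_le_sum fun i _ => htm1 i
        _ = m := by simp
    have h2 : ∑ r, tp' r ≤ (s : ℝ) := by
      calc ∑ r, tp' r ≤ ∑ _r : Fin s, (1:ℝ) :=
            Finset.sum_le_sum fun r _ => htp1 r
        _ = s := by simp
    linarith
end

section
/- Conversely, if the optimal value of the LP max 1ᵀt⁻ + 1ᵀt⁺ over system (14) equals m + s, then there exists μ ≥ 0 with 1ᵀμ = 1 such that X₀μ < x₀ and Y₀μ > y₀ componentwise; that is, (x₀,y₀) is strongly dominated by a convex combination of the other observations. -/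
/-- If the LP (15) attains the value `m + s`, then `(x₀, y₀)` is strongly
dominated by a convex combination of the other observations. -/
theorem stmt_17 {m s k : ℕ} (X : Matrix (Fin m) (Fin k) ℝ) (Y : Matrix (Fin s) (Fin k) ℝ)
    (hX : ∀ i j, 0 ≤ X i j) (hY : ∀ i j, 0 ≤ Y i j)
    (x₀ : Fin m → ℝ) (y₀ : Fin s → ℝ) (hx₀ : 0 ≤ x₀) (hy₀ : 0 ≤ y₀)
    (δ : Fin k → ℝ) (tm : Fin m → ℝ) (tp : Fin s → ℝ)
    (hfeas : Feasible X Y x₀ y₀ δ tm tp)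
    (hval : ∑ i, tm i + ∑ r, tp r = (m : ℝ) + s) :
    ∃ μ : Fin k → ℝ, 0 ≤ μ ∧ ∑ j, μ j = 1 ∧
      (∀ i, X.mulVec μ i < x₀ i) ∧ (∀ r, y₀ r < Y.mulVec μ r) := by
  obtain ⟨hδ, hS1, hXle, hYle, htm0, htm1, htp0, htp1⟩ := hfeas
  set S := ∑ j, δ j with hS
  have hSpos : 0 < S := lt_of_lt_of_le one_pos hS1
  -- sums are bounded
  have hsm : ∑ i, tm i ≤ (m : ℝ) := by
    calc ∑ i, tm i ≤ ∑ _i : Fin m, (1 : ℝ) := Finset.sum_le_sum (fun i _ => htm1 i)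
    _ = m := by simp
  have hsp : ∑ r, tp r ≤ (s : ℝ) := by
    calc ∑ r, tp r ≤ ∑ _r : Fin s, (1 : ℝ) := Finset.sum_le_sum (fun r _ => htp1 r)
    _ = s := by simp
  have hm : ∑ i, tm i = (m : ℝ) := by linarith
  have hp : ∑ r, tp r = (s : ℝ) := by linarith
  have htm : ∀ i, tm i = 1 := by
    intro i
    have := (Finset.sum_eq_sum_iff_of_le (fun i _ => htm1 i)).mp
      (by simpa using hm) i (Finset.mem_univ i)
    simpa using this
  have htp : ∀ r, tp r = 1 := by
    intro r
    have := (Finset.sum_eq_sum_iff_of_le (fun r _ => htp1 r)).mp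
      (by simpa using hp) r (Finset.mem_univ r)
    simpa using this
  refine ⟨fun j => δ j / S, fun j => div_nonneg (hδ j) hSpos.le, ?_, ?_, ?_⟩
  · rw [← Finset.sum_div]
    exact div_self hSpos.ne'
  · intro i
    have h1 : X.mulVec δ i + tm i ≤ S * x₀ i := hXle i
    rw [htm i] at h1
    have h2 : X.mulVec (fun j => δ j / S) i = X.mulVec δ i / S := by
      simp only [Matrix.mulVec, dotProduct, Finset.sum_div]
      exact Finset.sum_congr rfl fun j _ => by ring
    rw [h2]
    rw [div_lt_iff₀ hSpos]
    nlinarith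
  · intro r
    have h1 : S * y₀ r ≤ Y.mulVec δ r - tp r := hYle r
    rw [htp r] at h1
    have h2 : Y.mulVec (fun j => δ j / S) r = Y.mulVec δ r / S := by
      simp only [Matrix.mulVec, dotProduct, Finset.sum_div]
      exact Finset.sum_congr rfl fun j _ => by ring
    rw [h2]
    rw [lt_div_iff₀ hSpos]
    nlinarith
end
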